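/- arXiv:1509.03189 — 5 statements merged into one kernel-verified Lean document; each statement's English description precedes it below -/
import Mathlib

section
/- Let u be a nonprincipal ultrafilter on ℕ and let (X_n, B_n, μ_n) be a sequence of probability spaces. For every countable family {B_n^i ∈ B_n}_{i,n∈ℕ} there is a family {C_n ∈ B_n}_{n∈ℕ} such that ⋃_{i∈ℕ} [B_n^i]_u ⊆ [C_n]_u and lim_u μ_n(C_n) = lim_{i→∞} lim_u μ_n(B_n^1 ∪ … ∪ B_n^i). -/
open MeasureTheory Filter Topology
open scoped ENNReal symmDiff



/-! Ultraproducts of sets and the Loeb outer measure. -/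

/-- The equivalence relation on `∀ n, X n` identifying sequences that agree
`u`-almost everywhere. -/
def uRel (u : Ultrafilter ℕ) {X : ℕ → Type*} (x y : ∀ n, X n) : Prop :=
  ∀ᶠ n in (u : Filter ℕ), x n = y n

/-- The (set-theoretic) ultraproduct of the family `X n` with respect to the
ultrafilter `u`: the quotient of `∀ n, X n` by the relation identifying sequences
which agree `u`-almost everywhere. -/
def UProd (u : Ultrafilter ℕ) (X : ℕ → Type*) : Type _ :=
  Quot (uRel u (X := X))

/-- The class `[x_n]_u` of a sequence in the ultraproduct. -/
def uMk (u : Ultrafilter ℕ) {X : ℕ → Type*} (x : ∀ n, X n) : UProd u X :=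
  Quot.mk _ x

/-- The subset `[A_n]_u` of the ultraproduct determined by a sequence of subsets
`A n ⊆ X n`: the set of classes of sequences which belong to `A n` for `u`-almost
every `n`. -/
def uSet (u : Ultrafilter ℕ) {X : ℕ → Type*} (A : ∀ n, Set (X n)) : Set (UProd u X) :=
  {z | ∃ x : ∀ n, X n, uMk u x = z ∧ ∀ᶠ n in (u : Filter ℕ), x n ∈ A n}

/-- The limit of a sequence of extended nonnegative reals along the ultrafilter `u`
(it always exists since `ℝ≥0∞` is a compact Hausdorff space). -/
noncomputable def ulim (u : Ultrafilter ℕ) (f : ℕ → ℝ≥0∞) : ℝ≥0∞ :=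
  (u.map f).lim

/-- The Loeb outer measure `θ` on the ultraproduct: the infimum, over countable
covers of `A` by sets of the form `[B^i_n]_u` with all `B^i_n` measurable, of
`∑ᵢ lim_u μ_n (B^i_n)`. -/
noncomputable def loebOuter (u : Ultrafilter ℕ) {X : ℕ → Type*}
    [∀ n, MeasurableSpace (X n)] (μ : ∀ n, Measure (X n)) (A : Set (UProd u X)) : ℝ≥0∞ :=
  ⨅ (B : ℕ → ∀ n, Set (X n)) (_ : (∀ i n, MeasurableSet (B i n)) ∧
      A ⊆ ⋃ i, uSet u (B i)), ∑' i, ulim u fun n => μ n (B i n)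

/-- Carathéodory measurability with respect to the Loeb outer measure. -/
def LoebMeasurable (u : Ultrafilter ℕ) {X : ℕ → Type*}
    [∀ n, MeasurableSpace (X n)] (μ : ∀ n, Measure (X n)) (A : Set (UProd u X)) : Prop :=
  ∀ S : Set (UProd u X), loebOuter u μ (S ∩ A) + loebOuter u μ (S \ A) ≤ loebOuter u μ S

/-- The map on the ultraproduct induced by a sequence of maps `g n : X n → X n`. -/
def uMap (u : Ultrafilter ℕ) {X : ℕ → Type*} (g : ∀ n, X n → X n) :
    UProd u X → UProd u X :=
  Quot.lift (fun x => uMk u fun n => g n (x n))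
    (fun x y h => Quot.sound (h.mono fun n hn => by simpa using congrArg (g n) hn))

/-!
Let `D i n := B 0 n ∪ … ∪ B i n` and `a i := lim_u μ_n (D i n)`; the `a i` increase to some `L`.
A diagonal argument along `u` produces indices `k n → ∞` along `u` such that
`μ_n (D (k n) n) → L` along `u`, and `C n := D (k n) n` works: since `k n ≥ i` for `u`-almost
every `n`, each `[B i]_u` lies in `[C]_u`.
-/

lemma tendsto_ulim (u : Ultrafilter ℕ) (f : ℕ → ℝ≥0∞) : Tendsto f u (𝓝 (ulim u f)) :=
  (u.map f).le_nhds_lim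

lemma ulim_mono (u : Ultrafilter ℕ) {f g : ℕ → ℝ≥0∞} (h : ∀ n, f n ≤ g n) :
    ulim u f ≤ ulim u g :=
  le_of_tendsto_of_tendsto' (tendsto_ulim u f) (tendsto_ulim u g) h

open Classical in
lemma Filter.exists_tendsto_atTop_eventually_mem {l : Filter ℕ} (hl : l ≤ cofinite)
    {S : ℕ → Set ℕ} (hS : ∀ m, S m ∈ l) :
    ∃ j : ℕ → ℕ, Tendsto j l atTop ∧ ∀ᶠ n in l, n ∈ S (j n) := by
  let P : ℕ → ℕ → Prop := fun n m => ∀ m' ≤ m, n ∈ S m'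
  have hge : ∀ m, ∀ᶠ n in l, m ≤ n := fun m =>
    hl.trans Nat.cofinite_eq_atTop.le (eventually_ge_atTop m)
  have hP : ∀ m, ∀ᶠ n in l, m ≤ n ∧ P n m := fun m =>
    (hge m).and ((Set.finite_Iic m).eventually_all.2 fun m' _ => hS m')
  refine ⟨fun n => Nat.findGreatest (P n) n, tendsto_atTop.2 fun m => ?_, ?_⟩
  · filter_upwards [hP m] with n ⟨hmn, hPm⟩ using Nat.le_findGreatest hmn hPm
  · filter_upwards [hP 0] with n ⟨h0n, hP0⟩ using Nat.findGreatest_spec h0n hP0 _ le_rfl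

lemma Filter.exists_tendsto_diagonal {α : Type*} [TopologicalSpace α] {l : Filter ℕ}
    (hl : l ≤ cofinite) {f : ℕ → ℕ → α} {a : ℕ → α} {L : α} [(𝓝 L).IsCountablyGenerated]
    (hf : ∀ i, Tendsto (f i) l (𝓝 (a i))) (ha : Tendsto a atTop (𝓝 L)) :
    ∃ k : ℕ → ℕ, Tendsto k l atTop ∧ Tendsto (fun n => f (k n) n) l (𝓝 L) := by
  obtain ⟨V, hV⟩ := (𝓝 L).exists_antitone_basis
  have hi : ∀ m, ∃ i, m ≤ i ∧ a i ∈ interior (V m) := fun m =>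
    ((eventually_ge_atTop m).and (ha (interior_mem_nhds.2 (hV.mem m)))).exists
  choose i hmi hai using hi
  have hS : ∀ m, {n | f (i m) n ∈ V m} ∈ l := fun m =>
    hf (i m) (mem_of_superset (isOpen_interior.mem_nhds (hai m)) interior_subset)
  obtain ⟨j, hj, hjS⟩ := exists_tendsto_atTop_eventually_mem hl hS
  refine ⟨i ∘ j, tendsto_atTop_mono (fun n => hmi (j n)) hj, ?_⟩
  refine hV.toHasBasis.tendsto_right_iff.2 fun M _ => ?_
  filter_upwards [hj (eventually_ge_atTop M), hjS] with n hMj hn using hV.antitone hMj hn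

lemma monotone_biUnion_range_succ {α : Type*} (s : ℕ → Set α) :
    Monotone fun i => ⋃ j ∈ Finset.range (i + 1), s j := fun _ _ h =>
  Set.biUnion_subset_biUnion_left (by simpa using Finset.range_subset_range.2 (by omega))

theorem loeb_countable_cover_general (u : Ultrafilter ℕ) (hu : (u : Filter ℕ) ≤ Filter.cofinite)
    {X : ℕ → Type*} [∀ n, MeasurableSpace (X n)]
    (μ : ∀ n, Measure (X n))
    (B : ℕ → ∀ n, Set (X n)) (hB : ∀ i n, MeasurableSet (B i n)) :
    ∃ C : ∀ n, Set (X n), (∀ n, MeasurableSet (C n)) ∧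
      (⋃ i, uSet u (B i)) ⊆ uSet u C ∧
      Filter.Tendsto (fun i => ulim u fun n => μ n (⋃ j ∈ Finset.range (i + 1), B j n))
        Filter.atTop (nhds (ulim u fun n => μ n (C n))) := by
  set D : ℕ → ∀ n, Set (X n) := fun i n => ⋃ j ∈ Finset.range (i + 1), B j n
  have hD : ∀ n, Monotone (D · n) := fun n => monotone_biUnion_range_succ (B · n)
  have hlim : Tendsto (fun i => ulim u fun n => μ n (D i n)) atTop (𝓝 _) :=
    tendsto_atTop_iSup fun i i' h => ulim_mono u fun n => measure_mono (hD n h)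
  obtain ⟨k, hk, hkL⟩ := exists_tendsto_diagonal hu (fun i => tendsto_ulim u _) hlim
  refine ⟨fun n => D (k n) n, fun n => Finset.measurableSet_biUnion _ fun j _ => hB j n, ?_, ?_⟩
  · rintro z ⟨_, ⟨i, rfl⟩, x, rfl, hx⟩
    refine ⟨x, rfl, ?_⟩
    filter_upwards [hx, hk (eventually_ge_atTop i)] with n hxn hin
    exact hD n hin (Set.mem_biUnion (Finset.self_mem_range_succ i) hxn)
  · rwa [tendsto_nhds_unique (tendsto_ulim u _) hkL]

/-- For every countable family `{B i n}` of measurable sets there is a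
single sequence `{C n}` of measurable sets with `⋃ i [B i]_u ⊆ [C]_u` and
`lim_u μ_n (C n) = lim_{i → ∞} lim_u μ_n (B 0 n ∪ … ∪ B i n)`. -/
theorem loeb_countable_cover (u : Ultrafilter ℕ) (hu : (u : Filter ℕ) ≤ Filter.cofinite)
    {X : ℕ → Type*} [∀ n, MeasurableSpace (X n)]
    (μ : ∀ n, Measure (X n)) [∀ n, IsProbabilityMeasure (μ n)]
    (B : ℕ → ∀ n, Set (X n)) (hB : ∀ i n, MeasurableSet (B i n)) :
    ∃ C : ∀ n, Set (X n), (∀ n, MeasurableSet (C n)) ∧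
      (⋃ i, uSet u (B i)) ⊆ uSet u C ∧
      Filter.Tendsto (fun i => ulim u fun n => μ n (⋃ j ∈ Finset.range (i + 1), B j n))
        Filter.atTop (nhds (ulim u fun n => μ n (C n))) :=
  loeb_countable_cover_general u hu μ B hB
end

section
/- Let a, a_1, a_2, … be pmp actions of a countable group G on probability spaces and let F ⊆ G be a finite subset. Then the following are equivalent: (1) for every finite measurable partition α of X_a, lim_{n→∞} d_{F,α}(a, a_n) = 0; (2) for every k ∈ ℕ, lim_{n→∞} d_{F,k}(a, a_n) = 0. -/
open MeasureTheory Filter Topology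
open scoped ENNReal symmDiff



/-! Probability-measure-preserving actions, partitions, and weak containment. -/

/-- `a` is a probability-measure-preserving (pmp) action of the group `G` on the
measure space `(X, μ)`. -/
def IsPMP {G : Type*} [Group G] {X : Type*} [MeasurableSpace X]
    (μ : Measure X) (a : G → X → X) : Prop :=
  (∀ g : G, MeasurePreserving (a g) μ μ) ∧ (∀ x, a 1 x = x) ∧
    ∀ (g h : G) (x : X), a (g * h) x = a g (a h x)

/-- The translate `g · A` of a subset `A` under the action `a`. -/
def actSet {G X : Type*} (a : G → X → X) (g : G) (A : Set X) : Set X :=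
  a g '' A

/-- An (exact) finite measurable partition of `X` with `k` atoms. -/
def IsPartition {X : Type*} [MeasurableSpace X] {k : ℕ} (P : Fin k → Set X) : Prop :=
  (∀ i, MeasurableSet (P i)) ∧ Pairwise (Function.onFun Disjoint P) ∧ ⋃ i, P i = Set.univ

/-- `‖c(a,F,P) - c(b,F,Q)‖₁ = ∑_{i,j ≤ k} ∑_{f ∈ F} |μ(Pᵢ ∩ f·Pⱼ) - ν(Qᵢ ∩ f·Qⱼ)|`,
the `ℓ¹`-distance between the `F`-statistics of the two partitions. -/
noncomputable def statDist {G : Type*} {X Y : Type*} [MeasurableSpace X] [MeasurableSpace Y]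
    (μ : Measure X) (a : G → X → X) (ν : Measure Y) (b : G → Y → Y)
    (F : Finset G) {k : ℕ} (P : Fin k → Set X) (Q : Fin k → Set Y) : ℝ :=
  ∑ i : Fin k, ∑ j : Fin k, ∑ f ∈ F,
    |(μ (P i ∩ actSet a f (P j))).toReal - (ν (Q i ∩ actSet b f (Q j))).toReal|

/-- `d_{F,P}(a,b)`: the infimum over `k`-atom partitions `Q` of `X_b` of
`‖c(a,F,P) - c(b,F,Q)‖₁`. -/
noncomputable def dPart {G : Type*} {X Y : Type*} [MeasurableSpace X] [MeasurableSpace Y]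
    (μ : Measure X) (a : G → X → X) (ν : Measure Y) (b : G → Y → Y)
    (F : Finset G) {k : ℕ} (P : Fin k → Set X) : ℝ :=
  sInf {r : ℝ | ∃ Q : Fin k → Set Y, IsPartition Q ∧ r = statDist μ a ν b F P Q}

/-- `d_{F,k}(a,b)`: the supremum over `k`-atom partitions `P` of `X_a` of `d_{F,P}(a,b)`. -/
noncomputable def dNum {G : Type*} {X Y : Type*} [MeasurableSpace X] [MeasurableSpace Y]
    (μ : Measure X) (a : G → X → X) (ν : Measure Y) (b : G → Y → Y)
    (F : Finset G) (k : ℕ) : ℝ :=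
  sSup {r : ℝ | ∃ P : Fin k → Set X, IsPartition P ∧ r = dPart μ a ν b F P}

/-- Weak containment `a ≺ b` of pmp actions: every finite partition of `X_a` and
every finite set of group elements can be `ε`-simulated by a partition of `X_b`. -/
def WC {G : Type*} {X Y : Type*} [MeasurableSpace X] [MeasurableSpace Y]
    (μ : Measure X) (a : G → X → X) (ν : Measure Y) (b : G → Y → Y) : Prop :=
  ∀ ε : ℝ, 0 < ε → ∀ (F : Finset G) (k : ℕ) (P : Fin k → Set X), IsPartition P →
    ∃ Q : Fin k → Set Y, IsPartition Q ∧ statDist μ a ν b F P Q ≤ ε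

/-- The measure `μ` is diffuse (atomless in the sense of measure algebras):
every non-null measurable set contains a measurable subset of strictly
intermediate measure. -/
def Diffuse {X : Type*} [MeasurableSpace X] (μ : Measure X) : Prop :=
  ∀ A : Set X, MeasurableSet A → μ A ≠ 0 →
    ∃ B : Set X, MeasurableSet B ∧ B ⊆ A ∧ 0 < μ B ∧ μ B < μ A

/-- Diffuseness relative to a sub-σ-algebra `m`. -/
def DiffuseOn {X : Type*} (m : MeasurableSpace X) {m0 : MeasurableSpace X}
    (μ : Measure X) : Prop :=
  ∀ A : Set X, MeasurableSet[m] A → μ A ≠ 0 →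
    ∃ B : Set X, MeasurableSet[m] B ∧ B ⊆ A ∧ 0 < μ B ∧ μ B < μ A

/-!
The statistics `μ(Pᵢ ∩ f·Pⱼ)` of a `k`-atom partition `P` form a vector in a fixed compact cube,
and `d_{F,P}(a,b)` is `|Fin k × Fin k × F|`-Lipschitz in that vector. Pointwise convergence of
an equi-Lipschitz family on a totally bounded set is uniform, so `d_{F,P}(a,aₙ) → 0` for every
`P` forces `d_{F,k}(a,aₙ) = sup_P d_{F,P}(a,aₙ) → 0`. The converse is `d_{F,P} ≤ d_{F,k}`.
-/

theorem eventually_forall_le_of_totallyBounded_range {α ι E : Type*} [PseudoMetricSpace E]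
    {l : Filter α} {v : ι → E} (hv : TotallyBounded (Set.range v)) {f : α → ι → ℝ} {K : ℝ}
    (hK : 0 ≤ K) (hf : ∀ n i j, f n i ≤ K * dist (v i) (v j) + f n j)
    (h : ∀ i, Tendsto (fun n => f n i) l (𝓝 0)) : ∀ ε > 0, ∀ᶠ n in l, ∀ i, f n i ≤ ε := by
  intro ε hε
  set δ := ε / (2 * (K + 1))
  have hKδ : K * δ ≤ ε / 2 := by
    rw [mul_div_assoc', div_le_div_iff₀ (by positivity) two_pos]
    nlinarith
  obtain ⟨t, hts, htfin, hcov⟩ := Metric.finite_approx_of_totallyBounded hv δ (by positivity)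
  choose c hc using fun y : t => hts y.2
  have : Finite t := htfin.to_subtype
  have hcenters : ∀ᶠ n in l, ∀ y : t, f n (c y) ≤ ε / 2 :=
    eventually_all.2 fun y => (h (c y)).eventually (eventually_le_nhds (half_pos hε))
  filter_upwards [hcenters] with n hn i
  obtain ⟨y, hy, hiy⟩ := Set.mem_iUnion₂.1 (hcov (Set.mem_range_self i))
  have hdist : dist (v i) (v (c ⟨y, hy⟩)) ≤ δ := by rw [hc]; exact (Metric.mem_ball.1 hiy).le
  calc f n i ≤ K * dist (v i) (v (c ⟨y, hy⟩)) + f n (c ⟨y, hy⟩) := hf n i _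
    _ ≤ K * δ + ε / 2 := by gcongr; exact hn _
    _ ≤ ε := by linarith

section StatDist

variable {G X Y Z : Type*} [MeasurableSpace X] [MeasurableSpace Y] [MeasurableSpace Z]

noncomputable def statVec (μ : Measure X) (a : G → X → X) (F : Finset G) {k : ℕ}
    (P : Fin k → Set X) : Fin k × Fin k × F → ℝ :=
  fun x => μ.real (P x.1 ∩ actSet a x.2.2 (P x.2.1))

theorem statDist_eq_sum_abs_sub_statVec (μ : Measure X) (a : G → X → X) (ν : Measure Y)
    (b : G → Y → Y) (F : Finset G) {k : ℕ} (P : Fin k → Set X) (Q : Fin k → Set Y) :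
    statDist μ a ν b F P Q = ∑ x, |statVec μ a F P x - statVec ν b F Q x| := by
  simp only [statDist, statVec, Fintype.sum_prod_type, Measure.real]
  exact Finset.sum_congr rfl fun i _ => Finset.sum_congr rfl fun j _ =>
    (Finset.sum_coe_sort F _).symm

theorem statDist_nonneg (μ : Measure X) (a : G → X → X) (ν : Measure Y) (b : G → Y → Y)
    (F : Finset G) {k : ℕ} (P : Fin k → Set X) (Q : Fin k → Set Y) :
    0 ≤ statDist μ a ν b F P Q := by
  unfold statDist; positivity

theorem statDist_triangle (μ : Measure X) (a : G → X → X) (η : Measure Z) (c : G → Z → Z)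
    (ν : Measure Y) (b : G → Y → Y) (F : Finset G) {k : ℕ}
    (P : Fin k → Set X) (R : Fin k → Set Z) (Q : Fin k → Set Y) :
    statDist μ a ν b F P Q ≤ statDist μ a η c F P R + statDist η c ν b F R Q := by
  simp only [statDist_eq_sum_abs_sub_statVec, ← Finset.sum_add_distrib]
  exact Finset.sum_le_sum fun x _ => abs_sub_le _ _ _

theorem statDist_le_card_mul_dist (μ : Measure X) (a : G → X → X) (ν : Measure Y)
    (b : G → Y → Y) (F : Finset G) {k : ℕ} (P : Fin k → Set X) (Q : Fin k → Set Y) :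
    statDist μ a ν b F P Q ≤
      Fintype.card (Fin k × Fin k × F) * dist (statVec μ a F P) (statVec ν b F Q) := by
  rw [statDist_eq_sum_abs_sub_statVec, ← nsmul_eq_mul, ← Finset.card_univ,
    ← Finset.sum_const]
  exact Finset.sum_le_sum fun x _ => (Real.dist_eq _ _).symm.trans_le (dist_le_pi_dist _ _ x)

theorem statVec_mem_Icc (μ : Measure X) [IsFiniteMeasure μ] (a : G → X → X) (F : Finset G)
    {k : ℕ} (P : Fin k → Set X) (x : Fin k × Fin k × F) :
    statVec μ a F P x ∈ Set.Icc 0 (μ.real Set.univ) :=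
  ⟨measureReal_nonneg, measureReal_mono (Set.subset_univ _)⟩

theorem statDist_le_card_mul (μ : Measure X) [IsFiniteMeasure μ] (a : G → X → X)
    (ν : Measure Y) [IsFiniteMeasure ν] (b : G → Y → Y) (F : Finset G) {k : ℕ}
    (P : Fin k → Set X) (Q : Fin k → Set Y) :
    statDist μ a ν b F P Q ≤
      Fintype.card (Fin k × Fin k × F) * (μ.real Set.univ + ν.real Set.univ) := by
  rw [statDist_eq_sum_abs_sub_statVec, ← nsmul_eq_mul, ← Finset.card_univ,
    ← Finset.sum_const]
  refine Finset.sum_le_sum fun x _ => ?_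
  obtain ⟨hP₀, hP₁⟩ := statVec_mem_Icc μ a F P x
  obtain ⟨hQ₀, hQ₁⟩ := statVec_mem_Icc ν b F Q x
  exact abs_sub_le_of_nonneg_of_le hP₀ (by linarith) hQ₀ (by linarith)

theorem totallyBounded_range_statVec (μ : Measure X) [IsFiniteMeasure μ] (a : G → X → X)
    (F : Finset G) (k : ℕ) :
    TotallyBounded (Set.range (statVec μ a F : (Fin k → Set X) → _)) := by
  refine (isCompact_univ_pi fun _ => isCompact_Icc (a := 0) (b := μ.real Set.univ))
    |>.totallyBounded.subset ?_
  rintro _ ⟨P, rfl⟩ x -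
  exact statVec_mem_Icc μ a F P x

end StatDist

section DPart

variable {G X Y : Type*} [MeasurableSpace X] [MeasurableSpace Y]
  (μ : Measure X) (a : G → X → X) (ν : Measure Y) (b : G → Y → Y) (F : Finset G) {k : ℕ}

theorem dPart_nonneg (P : Fin k → Set X) : 0 ≤ dPart μ a ν b F P :=
  Real.sInf_nonneg <| by rintro _ ⟨Q, -, rfl⟩; exact statDist_nonneg μ a ν b F P Q

theorem dPart_le_statDist (P : Fin k → Set X) {Q : Fin k → Set Y} (hQ : IsPartition Q) :
    dPart μ a ν b F P ≤ statDist μ a ν b F P Q :=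
  csInf_le ⟨0, by rintro _ ⟨Q, -, rfl⟩; exact statDist_nonneg μ a ν b F P Q⟩ ⟨Q, hQ, rfl⟩

-- When `Y` has no `k`-atom partition, `dPart` is the junk value `sInf ∅ = 0`.
theorem dPart_le_of_forall_statDist_le (P : Fin k → Set X) {c : ℝ} (hc : 0 ≤ c)
    (h : ∀ Q, IsPartition Q → statDist μ a ν b F P Q ≤ c) : dPart μ a ν b F P ≤ c := by
  obtain ⟨Q, hQ⟩ | hY := em (∃ Q : Fin k → Set Y, IsPartition Q)
  · exact (dPart_le_statDist μ a ν b F P hQ).trans (h Q hQ)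
  · simpa [dPart, fun Q => not_exists.1 hY Q] using hc

theorem dPart_le_statDist_add_dPart (P P' : Fin k → Set X) :
    dPart μ a ν b F P ≤ statDist μ a μ a F P P' + dPart μ a ν b F P' := by
  obtain ⟨Q₀, hQ₀⟩ | hY := em (∃ Q : Fin k → Set Y, IsPartition Q)
  · rw [← sub_le_iff_le_add']
    refine le_csInf ⟨_, Q₀, hQ₀, rfl⟩ ?_
    rintro _ ⟨Q, hQ, rfl⟩
    linarith [dPart_le_statDist μ a ν b F P hQ, statDist_triangle μ a μ a ν b F P P' Q]
  · exact dPart_le_of_forall_statDist_le μ a ν b F P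
      (add_nonneg (statDist_nonneg ..) (dPart_nonneg ..)) fun Q hQ => (hY ⟨Q, hQ⟩).elim

theorem dNum_nonneg : 0 ≤ dNum μ a ν b F k :=
  Real.sSup_nonneg <| by rintro _ ⟨P, -, rfl⟩; exact dPart_nonneg μ a ν b F P

theorem dPart_le_dNum [IsFiniteMeasure μ] [IsFiniteMeasure ν] {P : Fin k → Set X}
    (hP : IsPartition P) : dPart μ a ν b F P ≤ dNum μ a ν b F k := by
  refine le_csSup ⟨Fintype.card (Fin k × Fin k × F) * (μ.real Set.univ + ν.real Set.univ), ?_⟩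
    ⟨P, hP, rfl⟩
  rintro _ ⟨P', -, rfl⟩
  exact dPart_le_of_forall_statDist_le μ a ν b F P' (by positivity)
    fun Q _ => statDist_le_card_mul μ a ν b F P' Q

end DPart

theorem dPart_tendsto_iff_dNum_tendsto_general {G : Type*}
    {X : Type*} [MeasurableSpace X]
    (μ : Measure X) [IsProbabilityMeasure μ] (a : G → X → X)
    {Y : ℕ → Type*} [∀ n, MeasurableSpace (Y n)]
    (ν : ∀ n, Measure (Y n)) [∀ n, IsProbabilityMeasure (ν n)]
    (b : ∀ n, G → Y n → Y n)
    (F : Finset G) :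
    (∀ (k : ℕ) (P : Fin k → Set X), IsPartition P →
        Tendsto (fun n => dPart μ a (ν n) (b n) F P) atTop (nhds 0)) ↔
    (∀ k : ℕ, Tendsto (fun n => dNum μ a (ν n) (b n) F k) atTop (nhds 0)) := by
  refine ⟨fun h k => ?_, fun h k P hP => squeeze_zero (fun n => dPart_nonneg ..)
    (fun n => dPart_le_dNum μ a (ν n) (b n) F hP) (h k)⟩
  have hunif := eventually_forall_le_of_totallyBounded_range
    ((totallyBounded_range_statVec μ a F k).subset (Set.range_comp_subset_range Subtype.val _))
    (Nat.cast_nonneg _)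
    (fun n (P P' : {P : Fin k → Set X // IsPartition P}) => (dPart_le_statDist_add_dPart μ a
      (ν n) (b n) F P.1 P'.1).trans (add_le_add_left (statDist_le_card_mul_dist ..) _))
    fun P : {P // IsPartition P} => h k P.1 P.2
  refine tendsto_order.2 ⟨fun r hr => .of_forall fun n => hr.trans_le (dNum_nonneg ..),
    fun r hr => ?_⟩
  filter_upwards [hunif _ (half_pos hr)] with n hn
  refine (Real.sSup_le ?_ (half_pos hr).le).trans_lt (half_lt_self hr)
  rintro _ ⟨P, hP, rfl⟩
  exact hn ⟨P, hP⟩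

/-- For pmp actions `a, a₁, a₂, …` of a countable group and a finite
`F ⊆ G`, the convergence `d_{F,P}(a, a_n) → 0` for every finite partition `P` of `X_a`
is equivalent to `d_{F,k}(a, a_n) → 0` for every `k`. -/
theorem dPart_tendsto_iff_dNum_tendsto {G : Type*} [Group G] [Countable G]
    {X : Type*} [MeasurableSpace X]
    (μ : Measure X) [IsProbabilityMeasure μ] (a : G → X → X) (ha : IsPMP μ a)
    {Y : ℕ → Type*} [∀ n, MeasurableSpace (Y n)]
    (ν : ∀ n, Measure (Y n)) [∀ n, IsProbabilityMeasure (ν n)]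
    (b : ∀ n, G → Y n → Y n) (hb : ∀ n, IsPMP (ν n) (b n))
    (F : Finset G) :
    (∀ (k : ℕ) (P : Fin k → Set X), IsPartition P →
        Tendsto (fun n => dPart μ a (ν n) (b n) F P) atTop (nhds 0)) ↔
    (∀ k : ℕ, Tendsto (fun n => dNum μ a (ν n) (b n) F k) atTop (nhds 0)) :=
  dPart_tendsto_iff_dNum_tendsto_general μ a ν b F
end

section
/- Let (X, μ) be an atomless standard Borel probability space, let b be a pmp action of a countable group G on some probability space, and let a, a_1, a_2, … be pmp actions of G on (X, μ) such that a_n → a in the weak topology (for every g ∈ G and every measurable A ⊆ X, μ(a_n(g)(A) Δ a(g)(A)) → 0). If a_n ≺ b for every n, then a ≺ b. In other words, the set of pmp actions on (X, μ) weakly contained in b is weakly closed. -/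
open MeasureTheory Filter Topology
open scoped ENNReal symmDiff



/-! Replacing `a` by `a_n` changes each statistic `μ(Pᵢ ∩ f·Pⱼ)` by at most
`μ(a_n(f)Pⱼ ∆ a(f)Pⱼ)`, which tends to `0`. Once `n` makes these errors small for the finitely
many `f ∈ F` and atoms `Pⱼ`, a partition of `X_b` simulating `(a_n, F, P)` within `ε/2` simulates
`(a, F, P)` within `ε`. -/

namespace MeasureTheory

variable {X : Type*} [MeasurableSpace X] {μ : Measure X}

lemma abs_measureReal_inter_sub_le_measureReal_symmDiff [IsFiniteMeasure μ] (s t u : Set X) :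
    |μ.real (s ∩ t) - μ.real (s ∩ u)| ≤ μ.real (t ∆ u) := by
  have key : ∀ t u : Set X, μ.real (s ∩ t) ≤ μ.real (s ∩ u) + μ.real (t ∆ u) := fun t u =>
    calc μ.real (s ∩ t) ≤ μ.real (s ∩ u ∪ t ∆ u) := measureReal_mono fun x ⟨hs, ht⟩ => by
            by_cases hu : x ∈ u
            · exact Or.inl ⟨hs, hu⟩
            · exact Or.inr (Or.inl ⟨ht, hu⟩)
      _ ≤ μ.real (s ∩ u) + μ.real (t ∆ u) := measureReal_union_le _ _
  have h₁ := key t u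
  have h₂ := key u t
  rw [symmDiff_comm] at h₂
  exact abs_sub_le_iff.2 ⟨by linarith, by linarith⟩

end MeasureTheory

section WeakContainment

open MeasureTheory

variable {G X Y : Type*} [MeasurableSpace X] [MeasurableSpace Y]

lemma statDist_le_statDist_add {μ : Measure X} [IsFiniteMeasure μ] (ν : Measure Y)
    (a a' : G → X → X) (b : G → Y → Y) (F : Finset G) {k : ℕ} (P : Fin k → Set X)
    (Q : Fin k → Set Y) {δ : ℝ}
    (hδ : ∀ j, ∀ f ∈ F, μ.real (actSet a' f (P j) ∆ actSet a f (P j)) ≤ δ) :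
    statDist μ a ν b F P Q ≤ statDist μ a' ν b F P Q + k * k * F.card * δ := by
  calc statDist μ a ν b F P Q
      ≤ ∑ i : Fin k, ∑ j : Fin k, ∑ f ∈ F,
          (|μ.real (P i ∩ actSet a' f (P j)) - ν.real (Q i ∩ actSet b f (Q j))| + δ) := by
        simp only [statDist, ← measureReal_def]
        gcongr with i _ j _ f hf
        calc |μ.real (P i ∩ actSet a f (P j)) - ν.real (Q i ∩ actSet b f (Q j))|
            ≤ |μ.real (P i ∩ actSet a f (P j)) - μ.real (P i ∩ actSet a' f (P j))|
              + |μ.real (P i ∩ actSet a' f (P j)) - ν.real (Q i ∩ actSet b f (Q j))| :=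
              abs_sub_le _ _ _
          _ ≤ δ + |μ.real (P i ∩ actSet a' f (P j)) - ν.real (Q i ∩ actSet b f (Q j))| := by
              gcongr
              rw [abs_sub_comm]
              exact (abs_measureReal_inter_sub_le_measureReal_symmDiff _ _ _).trans (hδ j f hf)
          _ = _ := add_comm _ _
    _ = statDist μ a' ν b F P Q + k * k * F.card * δ := by
        simp only [statDist, ← measureReal_def, Finset.sum_add_distrib, Finset.sum_const,
          nsmul_eq_mul, Finset.card_univ, Fintype.card_fin]
        ring

lemma eventually_measureReal_actSet_symmDiff_lt {μ : Measure X} (a : G → X → X)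
    (c : ℕ → G → X → X) (F : Finset G) {k : ℕ} (P : Fin k → Set X)
    (hconv : ∀ j, ∀ f ∈ F, Tendsto (fun n => μ (actSet (c n) f (P j) ∆ actSet a f (P j)))
      atTop (𝓝 0))
    {δ : ℝ} (hδ : 0 < δ) :
    ∀ᶠ n in atTop, ∀ j, ∀ f ∈ F, μ.real (actSet (c n) f (P j) ∆ actSet a f (P j)) < δ := by
  refine eventually_all.2 fun j => (eventually_all_finset F).2 fun f hf => ?_
  have h := (ENNReal.tendsto_toReal ENNReal.zero_ne_top).comp (hconv j f hf)
  rw [ENNReal.toReal_zero] at h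
  exact h.eventually (gt_mem_nhds hδ)

end WeakContainment

theorem wc_weakly_closed_general {G : Type*}
    {X : Type*} [MeasurableSpace X]
    (μ : Measure X) [IsProbabilityMeasure μ]
    {Y : Type*} [MeasurableSpace Y]
    (ν : Measure Y) (b : G → Y → Y)
    (a : G → X → X)
    (c : ℕ → G → X → X)
    (hconv : ∀ (g : G) (A : Set X), MeasurableSet A →
      Tendsto (fun n => μ ((c n g '' A) ∆ (a g '' A))) atTop (nhds 0))
    (hwc : ∀ n, WC μ (c n) ν b) :
    WC μ a ν b := by
  intro ε hε F k P hP
  set m : ℝ := k * k * F.card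
  set δ : ℝ := ε / 2 / (m + 1)
  have hmδ : m * δ ≤ ε / 2 := by
    rw [mul_div_left_comm]
    exact mul_le_of_le_one_right (by positivity) ((div_le_one (by positivity)).2 (by linarith))
  obtain ⟨n, hn⟩ := (eventually_measureReal_actSet_symmDiff_lt a c F P
    (fun j f _ => hconv f (P j) (hP.1 j)) (by positivity : 0 < δ)).exists
  obtain ⟨Q, hQ, hQε⟩ := hwc n (ε / 2) (half_pos hε) F k P hP
  refine ⟨Q, hQ, ?_⟩
  calc statDist μ a ν b F P Q ≤ statDist μ (c n) ν b F P Q + m * δ :=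
        statDist_le_statDist_add ν a (c n) b F P Q fun j f hf => (hn j f hf).le
    _ ≤ ε := by linarith

/-- If pmp actions `a_n` on an atomless standard Borel probability
space `(X, μ)` converge weakly to `a` and each `a_n` is weakly contained in `b`, then
`a` is weakly contained in `b`: the set of actions weakly contained in `b` is weakly
closed. -/
theorem wc_weakly_closed {G : Type*} [Group G] [Countable G]
    {X : Type*} [MeasurableSpace X] [StandardBorelSpace X]
    (μ : Measure X) [IsProbabilityMeasure μ] [NullSingletonClass μ]
    {Y : Type*} [MeasurableSpace Y]
    (ν : Measure Y) [IsProbabilityMeasure ν] (b : G → Y → Y) (hb : IsPMP ν b)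
    (a : G → X → X) (ha : IsPMP μ a)
    (c : ℕ → G → X → X) (hc : ∀ n, IsPMP μ (c n))
    (hconv : ∀ (g : G) (A : Set X), MeasurableSet A →
      Tendsto (fun n => μ ((c n g '' A) ∆ (a g '' A))) atTop (nhds 0))
    (hwc : ∀ n, WC μ (c n) ν b) :
    WC μ a ν b :=
  wc_weakly_closed_general μ ν b a c hconv hwc
end

section
/- Let a and b be pmp actions of a countable group G on atomless standard Borel probability spaces (X_a, μ_a) and (X_b, μ_b), and for g ∈ G write Fix_g(a) := {x ∈ X_a : g·x = x} and |Fix_g(a)| := μ_a(Fix_g(a)). If a ≺ b, then |Fix_g(b)| ≤ |Fix_g(a)| for every g ∈ G. In particular, if a and b are weakly equivalent then |Fix_g(a)| = |Fix_g(b)| for every g ∈ G, so g ↦ |Fix_g(·)| is well defined on weak equivalence classes. -/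
open MeasureTheory Filter Topology
open scoped ENNReal symmDiff



/-! If `g` fixes `y`, then `y ∈ Qᵢ ∩ g·Qᵢ` for the atom `Qᵢ` containing it, so every
partition `Q` of `X_b` has `|Fix_g(b)| ≤ ∑ᵢ ν(Qᵢ ∩ g·Qᵢ)`. On the other side, a countable
separating family of measurable sets exhausts the points moved by `g` by countably many measurable
sets `Eₙ` with `Eₙ ∩ g·Eₙ = ∅`; partitioning `X_a` into `E₀, …, E_{N-1}` and the rest gives
`∑ᵢ μ(Pᵢ ∩ g·Pᵢ) ≤ |Fix_g(a)| + ε` for large `N`. Weak containment transfers this diagonal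
statistic from `P` to some `Q` up to `ε`. -/

open Function

section FixedPoints

variable {X : Type*} [MeasurableSpace X]

theorem exists_seq_measurableSet_mem_notMem [MeasurableSpace.CountablySeparated X] :
    ∃ S : ℕ → Set X, (∀ n, MeasurableSet (S n)) ∧
      ∀ x y, x ≠ y → ∃ n, x ∈ S n ∧ y ∉ S n := by
  obtain ⟨S, hSm, hS⟩ := exists_seq_separating X MeasurableSet.empty Set.univ
  let e := Equiv.boolProdNatEquivNat
  refine ⟨fun n => cond (e.symm n).1 (S (e.symm n).2) (S (e.symm n).2)ᶜ, ?_, ?_⟩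
  · intro n
    dsimp only
    cases (e.symm n).1
    exacts [(hSm _).compl, hSm _]
  · intro x y hxy
    obtain ⟨m, hm⟩ : ∃ m, ¬(x ∈ S m ↔ y ∈ S m) := by
      by_contra! h
      exact hxy (hS x trivial y trivial h)
    by_cases hx : x ∈ S m
    · exact ⟨e (true, m), by simpa [hx] using hm⟩
    · exact ⟨e (false, m), by simpa [hx] using hm⟩

theorem exists_disjoint_cover_compl_fixedPoints [MeasurableSpace.CountablySeparated X]
    {T : X → X} (hT : Measurable T) :
    ∃ E : ℕ → Set X, (∀ n, MeasurableSet (E n)) ∧ Pairwise (Disjoint on E) ∧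
      (∀ n, Disjoint (E n) (T '' E n)) ∧ (fixedPoints T)ᶜ ⊆ ⋃ n, E n := by
  obtain ⟨S, hSm, hS⟩ := exists_seq_measurableSet_mem_notMem (X := X)
  set C : ℕ → Set X := fun n => S n ∩ T ⁻¹' (S n)ᶜ
  have hC : ∀ n, Disjoint (C n) (T '' C n) := by
    intro n
    rw [Set.disjoint_right]
    rintro _ ⟨x, ⟨-, hx⟩, rfl⟩ ⟨hTx, -⟩
    exact hx hTx
  refine ⟨disjointed C, .disjointed fun n => (hSm n).inter (hT (hSm n).compl),
    disjoint_disjointed C, fun n => ?_, ?_⟩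
  · exact (hC n).mono (disjointed_subset C n) (Set.image_mono (disjointed_subset C n))
  · intro x hx
    obtain ⟨n, hxn, hTxn⟩ := hS x (T x) (Ne.symm hx)
    rw [iUnion_disjointed]
    exact Set.mem_iUnion.2 ⟨n, hxn, hTxn⟩

theorem isPartition_cons_compl_iUnion {N : ℕ} {E : Fin N → Set X}
    (hm : ∀ i, MeasurableSet (E i)) (hd : Pairwise (Disjoint on E)) :
    IsPartition (Fin.cons (⋃ i, E i)ᶜ E : Fin (N + 1) → Set X) := by
  refine ⟨Fin.cases (.compl (.iUnion hm)) hm, ?_, ?_⟩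
  · have h0 : ∀ i, Disjoint (⋃ i, E i)ᶜ (E i) :=
      fun i => disjoint_compl_left.mono_right (Set.subset_iUnion E i)
    intro i j hij
    induction i using Fin.cases <;> induction j using Fin.cases
    · exact absurd rfl hij
    · exact h0 _
    · exact (h0 _).symm
    · exact hd (Fin.succ_injective _ |>.ne_iff.1 hij)
  · rw [Set.iUnion_cons, Set.compl_union_self]

theorem exists_isPartition_sum_measure_inter_image_le [MeasurableSpace.CountablySeparated X]
    (μ : Measure X) [IsFiniteMeasure μ] {T : X → X} (hT : Measurable T)
    {ε : ℝ≥0∞} (hε : 0 < ε) :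
    ∃ (k : ℕ) (P : Fin k → Set X), IsPartition P ∧
      ∑ i, μ (P i ∩ T '' P i) ≤ μ (fixedPoints T) + ε := by
  obtain ⟨E, hEm, hEd, hET, hEcover⟩ := exists_disjoint_cover_compl_fixedPoints hT
  obtain ⟨N, hN⟩ := ((tendsto_measure_biUnion_Ici_zero_of_pairwise_disjoint (μ := μ)
    (fun n => (hEm n).nullMeasurableSet) hEd).eventually (gt_mem_nhds hε)).exists
  let E' : Fin N → Set X := fun i => E i
  refine ⟨N + 1, Fin.cons (⋃ i, E' i)ᶜ E',
    isPartition_cons_compl_iUnion (fun i => hEm i) (hEd.comp_of_injective Fin.val_injective), ?_⟩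
  have hrest : (⋃ i, E' i)ᶜ ⊆ fixedPoints T ∪ ⋃ n ≥ N, E n := by
    intro x hx
    by_cases hfix : IsFixedPt T x
    · exact Or.inl hfix
    obtain ⟨n, hn⟩ := Set.mem_iUnion.1 (hEcover hfix)
    have hNn : N ≤ n := by
      by_contra! hlt
      exact hx (Set.mem_iUnion.2 ⟨⟨n, hlt⟩, hn⟩)
    exact Or.inr (Set.mem_biUnion hNn hn)
  rw [Fin.sum_univ_succ]
  simp only [Fin.cons_zero, Fin.cons_succ, E', (hET _).inter_eq, measure_empty,
    Finset.sum_const_zero, add_zero]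
  calc μ ((⋃ i, E' i)ᶜ ∩ T '' (⋃ i, E' i)ᶜ)
      ≤ μ (fixedPoints T ∪ ⋃ n ≥ N, E n) := measure_mono (Set.inter_subset_left.trans hrest)
    _ ≤ μ (fixedPoints T) + ε := (measure_union_le _ _).trans (by gcongr; exact hN.le)

theorem measure_fixedPoints_le_sum_measure_inter_image (μ : Measure X) (T : X → X)
    {ι : Type*} [Fintype ι] {Q : ι → Set X} (hQ : ⋃ i, Q i = Set.univ) :
    μ (fixedPoints T) ≤ ∑ i, μ (Q i ∩ T '' Q i) := by
  refine (measure_mono fun x (hx : T x = x) => ?_).trans (measure_iUnion_fintype_le μ _)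
  obtain ⟨i, hi⟩ := Set.mem_iUnion.1 (hQ.symm ▸ Set.mem_univ x : x ∈ ⋃ i, Q i)
  exact Set.mem_iUnion.2 ⟨i, hi, x, hi, hx⟩

end FixedPoints

theorem sum_measure_inter_actSet_le_add_statDist {G X Y : Type*}
    [MeasurableSpace X] [MeasurableSpace Y] (μ : Measure X) (a : G → X → X)
    (ν : Measure Y) (b : G → Y → Y) (g : G) {k : ℕ} (P : Fin k → Set X) (Q : Fin k → Set Y) :
    ∑ i, (ν (Q i ∩ actSet b g (Q i))).toReal ≤
      ∑ i, (μ (P i ∩ actSet a g (P i))).toReal + statDist μ a ν b {g} P Q := by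
  unfold statDist
  simp only [Finset.sum_singleton]
  rw [← Finset.sum_add_distrib]
  gcongr with i
  set d : Fin k → ℝ := fun j =>
    (μ (P i ∩ actSet a g (P j))).toReal - (ν (Q i ∩ actSet b g (Q j))).toReal
  have hdiag : |d i| ≤ ∑ j, |d j| :=
    Finset.single_le_sum (f := fun j => |d j|) (fun _ _ => abs_nonneg _) (Finset.mem_univ i)
  linarith [neg_abs_le (d i)]

theorem measure_fixedPoints_le_of_wc {G X Y : Type*}
    [MeasurableSpace X] [MeasurableSpace.CountablySeparated X] [MeasurableSpace Y]
    (μ : Measure X) [IsFiniteMeasure μ] (ν : Measure Y) [IsFiniteMeasure ν]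
    (a : G → X → X) (b : G → Y → Y) (hab : WC μ a ν b) (g : G) (hg : Measurable (a g)) :
    ν (fixedPoints (b g)) ≤ μ (fixedPoints (a g)) := by
  rw [← ENNReal.toReal_le_toReal (measure_ne_top ν _) (measure_ne_top μ _)]
  refine le_of_forall_pos_le_add fun ε hε => ?_
  obtain ⟨k, P, hP, hPsum⟩ : ∃ (k : ℕ) (P : Fin k → Set X), IsPartition P ∧
      ∑ i, μ (P i ∩ actSet a g (P i)) ≤ μ (fixedPoints (a g)) + ENNReal.ofReal (ε / 2) :=
    exists_isPartition_sum_measure_inter_image_le μ hg (ENNReal.ofReal_pos.2 (half_pos hε))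
  obtain ⟨Q, hQ, hPQ⟩ := hab (ε / 2) (half_pos hε) {g} k P hP
  have hPsum' :
      ∑ i, (μ (P i ∩ actSet a g (P i))).toReal ≤ (μ (fixedPoints (a g))).toReal + ε / 2 := by
    rw [← ENNReal.toReal_sum fun i _ => measure_ne_top μ _]
    simpa [ENNReal.toReal_add, half_pos hε |>.le] using
      ENNReal.toReal_mono (by finiteness) hPsum
  calc (ν (fixedPoints (b g))).toReal
      ≤ ∑ i, (ν (Q i ∩ actSet b g (Q i))).toReal := by
        rw [← ENNReal.toReal_sum fun i _ => measure_ne_top ν _]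
        exact ENNReal.toReal_mono (ENNReal.sum_ne_top.2 fun _ _ => measure_ne_top ν _)
          (measure_fixedPoints_le_sum_measure_inter_image ν (b g) hQ.2.2)
    _ ≤ ∑ i, (μ (P i ∩ actSet a g (P i))).toReal + ε / 2 :=
        (sum_measure_inter_actSet_le_add_statDist μ a ν b g P Q).trans (by gcongr)
    _ ≤ (μ (fixedPoints (a g))).toReal + ε := by linarith

theorem fix_measure_antitone_of_wc_general {G : Type*} [Group G]
    {X : Type*} [MeasurableSpace X] [StandardBorelSpace X]
    (μ : Measure X) [IsProbabilityMeasure μ]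
    {Y : Type*} [MeasurableSpace Y] [StandardBorelSpace Y]
    (ν : Measure Y) [IsProbabilityMeasure ν]
    (a : G → X → X) (ha : IsPMP μ a) (b : G → Y → Y) (hb : IsPMP ν b)
    (hab : WC μ a ν b) :
    (∀ g : G, ν {y : Y | b g y = y} ≤ μ {x : X | a g x = x}) ∧
    (WC ν b μ a → ∀ g : G, ν {y : Y | b g y = y} = μ {x : X | a g x = x}) :=
  ⟨fun g => measure_fixedPoints_le_of_wc μ ν a b hab g (ha.1 g).measurable,
    fun hba g => le_antisymm (measure_fixedPoints_le_of_wc μ ν a b hab g (ha.1 g).measurable)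
      (measure_fixedPoints_le_of_wc ν μ b a hba g (hb.1 g).measurable)⟩

/-- If `a ≺ b` are pmp actions of a countable group on atomless
standard Borel probability spaces, then `|Fix_g(b)| ≤ |Fix_g(a)|` for every `g ∈ G`;
in particular weakly equivalent actions have the same measure of fixed-point sets, so
`g ↦ |Fix_g(·)|` is well defined on weak equivalence classes. -/
theorem fix_measure_antitone_of_wc {G : Type*} [Group G] [Countable G]
    {X : Type*} [MeasurableSpace X] [StandardBorelSpace X]
    (μ : Measure X) [IsProbabilityMeasure μ] [NullSingletonClass μ]
    {Y : Type*} [MeasurableSpace Y] [StandardBorelSpace Y]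
    (ν : Measure Y) [IsProbabilityMeasure ν] [NullSingletonClass ν]
    (a : G → X → X) (ha : IsPMP μ a) (b : G → Y → Y) (hb : IsPMP ν b)
    (hab : WC μ a ν b) :
    (∀ g : G, ν {y : Y | b g y = y} ≤ μ {x : X | a g x = x}) ∧
    (WC ν b μ a → ∀ g : G, ν {y : Y | b g y = y} = μ {x : X | a g x = x}) :=
  fix_measure_antitone_of_wc_general μ ν a ha b hb hab
end

section
/- Every pmp action a of a countable group G on an atomless probability space (X_a, μ_a) has a standard atomless factor: there exists a countably generated, G-invariant sub-σ-algebra F of the measurable sets of X_a such that the measure μ_a restricted to F is atomless. -/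
open MeasureTheory Filter Topology
open scoped ENNReal symmDiff



/-!
In an atomless finite measure space, a maximal disjoint family of measurable sets of measure
in `(0, ε]` is countable and, by atomlessness, covers `X` up to a null set; so `X` is a countable
union of measurable sets of measure at most `ε`. The σ-algebra generated by all `G`-translates of
such covers for `ε = 1/n` is countably generated and `G`-invariant, and the measure stays
atomless on it because a set of positive measure meets some piece of a fine enough cover in a set
of positive but smaller measure.
-/

namespace Diffuse

variable {X : Type*} [MeasurableSpace X] {μ : Measure X} [IsFiniteMeasure μ]

theorem exists_subset_two_mul_le (hd : Diffuse μ) {A : Set X} (hA : MeasurableSet A)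
    (hA0 : μ A ≠ 0) : ∃ B, MeasurableSet B ∧ B ⊆ A ∧ 0 < μ B ∧ 2 * μ B ≤ μ A := by
  obtain ⟨B, hB, hBA, hB0, hBA'⟩ := hd A hA hA0
  have hdiff : μ (A \ B) = μ A - μ B := measure_sdiff hBA hB.nullMeasurableSet (measure_ne_top μ B)
  rcases le_total (2 * μ B) (μ A) with h | h
  · exact ⟨B, hB, hBA, hB0, h⟩
  · refine ⟨A \ B, hA.diff hB, Set.sdiff_subset, ?_, ?_⟩
    · rw [hdiff]
      exact tsub_pos_of_lt hBA'
    · rw [hdiff, ENNReal.mul_sub (fun _ _ => ENNReal.ofNat_ne_top), two_mul]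
      exact tsub_le_iff_right.mpr (add_le_add le_rfl h)

theorem exists_subset_measure_pos_le (hd : Diffuse μ) {A : Set X} (hA : MeasurableSet A)
    (hA0 : μ A ≠ 0) {ε : ℝ≥0∞} (hε : ε ≠ 0) :
    ∃ B, MeasurableSet B ∧ B ⊆ A ∧ 0 < μ B ∧ μ B ≤ ε := by
  have halving : ∀ n : ℕ, ∃ B, MeasurableSet B ∧ B ⊆ A ∧ 0 < μ B ∧ 2 ^ n * μ B ≤ μ A := by
    intro n
    induction n with
    | zero => exact ⟨A, hA, subset_rfl, pos_iff_ne_zero.mpr hA0, by simp⟩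
    | succ n ih =>
      obtain ⟨B, hB, hBA, hB0, hBle⟩ := ih
      obtain ⟨B', hB', hB'B, hB'0, hB'le⟩ := hd.exists_subset_two_mul_le hB hB0.ne'
      refine ⟨B', hB', hB'B.trans hBA, hB'0, ?_⟩
      calc 2 ^ (n + 1) * μ B' = 2 ^ n * (2 * μ B') := by rw [pow_succ, mul_assoc]
        _ ≤ 2 ^ n * μ B := by gcongr
        _ ≤ μ A := hBle
  obtain ⟨n, hn⟩ := ENNReal.exists_nat_mul_gt hε (measure_ne_top μ A)
  obtain ⟨B, hB, hBA, hB0, hBle⟩ := halving n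
  have h2n : (n : ℝ≥0∞) ≤ 2 ^ n := by exact_mod_cast Nat.lt_two_pow_self.le
  have hlt : 2 ^ n * μ B < 2 ^ n * ε :=
    calc 2 ^ n * μ B ≤ μ A := hBle
      _ < n * ε := hn
      _ ≤ 2 ^ n * ε := by gcongr
  exact ⟨B, hB, hBA, hB0, ((ENNReal.mul_lt_mul_iff_right (by simp) (by simp)).mp hlt).le⟩

theorem exists_countable_cover_measure_le (hd : Diffuse μ) {ε : ℝ≥0∞} (hε : ε ≠ 0) :
    ∃ 𝒞 : Set (Set X), 𝒞.Countable ∧ (∀ s ∈ 𝒞, MeasurableSet s ∧ μ s ≤ ε) ∧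
      ⋃₀ 𝒞 = Set.univ := by
  let small : Set (Set X) := {s | MeasurableSet s ∧ 0 < μ s ∧ μ s ≤ ε}
  obtain ⟨𝒟, ⟨h𝒟small, h𝒟disj⟩, hmax⟩ :=
    zorn_subset {𝒟 : Set (Set X) | 𝒟 ⊆ small ∧ 𝒟.PairwiseDisjoint id} fun c hc hchain =>
      ⟨⋃₀ c, ⟨Set.sUnion_subset fun _ h => (hc h).1,
        (hchain.pairwiseDisjoint_sUnion id).mpr fun _ h => (hc h).2⟩,
        fun _ => Set.subset_sUnion_of_mem⟩
  have h𝒟c : 𝒟.Countable := by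
    have hpos := Measure.countable_meas_pos_of_disjoint_iUnion (μ := μ) (As := ((↑) : 𝒟 → Set X))
      (fun s => (h𝒟small s.2).1) fun s t hst => h𝒟disj s.2 t.2 (Subtype.coe_ne_coe.mpr hst)
    rw [Set.eq_univ_of_forall (s := {s : 𝒟 | 0 < μ s}) fun s => (h𝒟small s.2).2.1] at hpos
    exact Set.countable_coe_iff.mp (Set.countable_univ_iff.mp hpos)
  have hU : MeasurableSet (⋃₀ 𝒟) := MeasurableSet.sUnion h𝒟c fun s hs => (h𝒟small hs).1
  have hnull : μ (⋃₀ 𝒟)ᶜ = 0 := by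
    by_contra h
    obtain ⟨B, hB, hBU, hB0, hBε⟩ := hd.exists_subset_measure_pos_le hU.compl h hε
    have hB𝒟 : B ∈ 𝒟 := hmax ⟨Set.insert_subset ⟨hB, hB0, hBε⟩ h𝒟small,
      h𝒟disj.insert fun t ht _ =>
        (disjoint_compl_left.mono_right (Set.subset_sUnion_of_mem ht)).mono_left hBU⟩
      (Set.subset_insert B 𝒟) (Set.mem_insert B 𝒟)
    have hBempty : B = ∅ := Set.subset_eq_empty
      (Set.subset_inter (Set.subset_sUnion_of_mem hB𝒟) hBU) (Set.inter_compl_self _)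
    simp [hBempty] at hB0
  refine ⟨insert (⋃₀ 𝒟)ᶜ 𝒟, h𝒟c.insert _, ?_, by rw [Set.sUnion_insert, Set.compl_union_self]⟩
  rintro s (rfl | hs)
  · exact ⟨hU.compl, hnull ▸ zero_le⟩
  · exact ⟨(h𝒟small hs).1, (h𝒟small hs).2.2⟩

end Diffuse

theorem diffuseOn_of_forall_countable_cover {X : Type*} {m m0 : MeasurableSpace X}
    {μ : Measure[m0] X}
    (h : ∀ ε : ℝ≥0∞, ε ≠ 0 → ∃ 𝒞 : Set (Set X), 𝒞.Countable ∧
      (∀ s ∈ 𝒞, MeasurableSet[m] s ∧ μ s ≤ ε) ∧ ⋃₀ 𝒞 = Set.univ) :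
    DiffuseOn m μ := by
  intro A hA hA0
  obtain ⟨ε, hε0, hεA⟩ := exists_between (pos_iff_ne_zero.mpr hA0)
  obtain ⟨𝒞, h𝒞c, h𝒞, h𝒞U⟩ := h ε hε0.ne'
  obtain ⟨s, hs, hAs⟩ : ∃ s ∈ 𝒞, μ (A ∩ s) ≠ 0 := by
    by_contra! hnull
    apply hA0
    rw [← Set.inter_univ A, ← h𝒞U, Set.sUnion_eq_biUnion, Set.inter_iUnion₂]
    exact (measure_biUnion_null_iff h𝒞c).mpr hnull
  exact ⟨A ∩ s, hA.inter (h𝒞 s hs).1, Set.inter_subset_left, pos_iff_ne_zero.mpr hAs,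
    (measure_mono Set.inter_subset_right).trans_lt ((h𝒞 s hs).2.trans_lt hεA)⟩

section Action

variable {G X : Type*} {a : G → X → X}

def actTranslates (a : G → X → X) (𝒞 : Set (Set X)) : Set (Set X) :=
  ⋃ g, actSet a g '' 𝒞

theorem Set.Countable.actTranslates [Countable G] {𝒞 : Set (Set X)} (h𝒞 : 𝒞.Countable) :
    (actTranslates a 𝒞).Countable :=
  Set.countable_iUnion fun _ => h𝒞.image _

variable [Group G]

theorem actSet_eq_preimage (h1 : ∀ x, a 1 x = x) (hmul : ∀ g h x, a (g * h) x = a g (a h x))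
    (g : G) (A : Set X) : actSet a g A = a g⁻¹ ⁻¹' A :=
  congrFun (Set.image_eq_preimage_of_inverse (fun x => by rw [← hmul, inv_mul_cancel, h1])
    (fun x => by rw [← hmul, mul_inv_cancel, h1])) A

theorem actSet_actSet (hmul : ∀ g h x, a (g * h) x = a g (a h x)) (g h : G) (A : Set X) :
    actSet a g (actSet a h A) = actSet a (g * h) A := by
  simp only [actSet, Set.image_image, hmul]

theorem actSet_one (h1 : ∀ x, a 1 x = x) (A : Set X) : actSet a 1 A = A := by
  simp [actSet, h1]

theorem subset_actTranslates (h1 : ∀ x, a 1 x = x) (𝒞 : Set (Set X)) :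
    𝒞 ⊆ actTranslates a 𝒞 := fun s hs =>
  Set.mem_iUnion_of_mem 1 ⟨s, hs, actSet_one h1 s⟩

theorem actSet_mem_actTranslates (hmul : ∀ g h x, a (g * h) x = a g (a h x)) {𝒞 : Set (Set X)}
    (g : G) {t : Set X} (ht : t ∈ actTranslates a 𝒞) : actSet a g t ∈ actTranslates a 𝒞 := by
  obtain ⟨h, s, hs, rfl⟩ := Set.mem_iUnion.mp ht
  exact Set.mem_iUnion_of_mem (g * h) ⟨s, hs, (actSet_actSet hmul g h s).symm⟩

theorem measurableSet_of_mem_actTranslates [MeasurableSpace X] (h1 : ∀ x, a 1 x = x)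
    (hmul : ∀ g h x, a (g * h) x = a g (a h x)) (hmeas : ∀ g, Measurable (a g))
    {𝒞 : Set (Set X)} (h𝒞 : ∀ s ∈ 𝒞, MeasurableSet s) :
    ∀ t ∈ actTranslates a 𝒞, MeasurableSet t := by
  intro t ht
  obtain ⟨g, s, hs, rfl⟩ := Set.mem_iUnion.mp ht
  rw [actSet_eq_preimage h1 hmul]
  exact hmeas g⁻¹ (h𝒞 s hs)

theorem measurableSet_generateFrom_actSet (h1 : ∀ x, a 1 x = x)
    (hmul : ∀ g h x, a (g * h) x = a g (a h x)) {S : Set (Set X)}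
    (hS : ∀ g, ∀ s ∈ S, actSet a g s ∈ S) (g : G) {A : Set X}
    (hA : MeasurableSet[MeasurableSpace.generateFrom S] A) :
    MeasurableSet[MeasurableSpace.generateFrom S] (actSet a g A) := by
  rw [actSet_eq_preimage h1 hmul]
  refine @measurable_generateFrom _ _ (MeasurableSpace.generateFrom S) S _ (fun t ht => ?_) A hA
  rw [← actSet_eq_preimage h1 hmul]
  exact MeasurableSpace.measurableSet_generateFrom (hS g t ht)

end Action

/-- Every pmp action of a countable group on an atomless probability
space has a standard atomless factor: a countably generated `G`-invariant
sub-σ-algebra on which the measure is still atomless. -/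
theorem exists_standard_diffuse_factor {G : Type*} [Group G] [Countable G]
    {X : Type*} [m0 : MeasurableSpace X]
    (μ : Measure X) [IsProbabilityMeasure μ]
    (a : G → X → X) (ha : IsPMP μ a) (hd : Diffuse μ) :
    ∃ m : MeasurableSpace X, m ≤ m0 ∧
      (∃ S : Set (Set X), S.Countable ∧ m = MeasurableSpace.generateFrom S) ∧
      (∀ (g : G) (A : Set X), MeasurableSet[m] A → MeasurableSet[m] (actSet a g A)) ∧
      DiffuseOn m μ := by
  obtain ⟨hpres, h1, hmul⟩ := ha
  choose 𝒞 h𝒞c h𝒞 h𝒞U using fun n : ℕ =>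
    hd.exists_countable_cover_measure_le (ε := (n : ℝ≥0∞)⁻¹) (by simp)
  have h𝒞meas : ∀ s ∈ ⋃ n, 𝒞 n, MeasurableSet s := by
    simp only [Set.mem_iUnion]
    rintro s ⟨n, hs⟩
    exact (h𝒞 n s hs).1
  let S := actTranslates a (⋃ n, 𝒞 n)
  refine ⟨MeasurableSpace.generateFrom S, MeasurableSpace.generateFrom_le
      (measurableSet_of_mem_actTranslates h1 hmul (fun g => (hpres g).measurable) h𝒞meas),
    ⟨S, (Set.countable_iUnion h𝒞c).actTranslates, rfl⟩,
    fun g _ => measurableSet_generateFrom_actSet h1 hmul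
      (fun g _ => actSet_mem_actTranslates hmul g) g,
    diffuseOn_of_forall_countable_cover fun ε hε => ?_⟩
  obtain ⟨n, hn⟩ := ENNReal.exists_inv_nat_lt hε
  refine ⟨𝒞 n, h𝒞c n, fun s hs => ⟨?_, (h𝒞 n s hs).2.trans hn.le⟩, h𝒞U n⟩
  exact MeasurableSpace.measurableSet_generateFrom
    (subset_actTranslates h1 _ (Set.mem_iUnion_of_mem n hs))
end
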